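/- arXiv:2203.02368 — 2 statements merged into one kernel-verified Lean document; each statement's English description precedes it below -/
import Mathlib

section
/- Let C = {0,1}^ℕ and let E = ℝ^C carry the product topology. Then: (i) E is a tame locally convex space; (ii) the sequence (π_n), where π_n ∈ E is the n-th coordinate projection C → ℝ, is bounded in E and has no weak Cauchy subsequence, so E is not a Rosenthal lcs; (iii) the dense linear subspace Y ⊆ E consisting of all functions C → ℝ with finite support is a Rosenthal lcs. In particular, Rosenthal's dichotomy fails in E: the bounded sequence (π_n) has neither a weak Cauchy subsequence nor an l¹-subsequence. -/
open Filter Topology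

/-- A sequence of real-valued functions is (combinatorially) independent. -/
def IndepSeq {X : Type*} (f : ℕ → X → ℝ) : Prop :=
  ∃ a b : ℝ, a < b ∧ ∀ P M : Finset ℕ, Disjoint P M →
    ∃ x : X, (∀ n ∈ P, f n x < a) ∧ (∀ n ∈ M, b < f n x)

/-- A family of real-valued functions is tame if it contains no independent sequence. -/
def IsTameFamily {X : Type*} (F : Set (X → ℝ)) : Prop :=
  ¬ ∃ f : ℕ → X → ℝ, (∀ n, f n ∈ F) ∧ IndepSeq f

section Defs

variable {E : Type*} [AddCommGroup E] [Module ℝ E] [TopologicalSpace E]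

/-- A set of continuous functionals (with the weak-star topology) is equicontinuous. -/
def IsEquicontinuousSet (K : Set (WeakDual ℝ E)) : Prop :=
  ∀ ε : ℝ, 0 < ε → ∃ U ∈ nhds (0 : E), ∀ φ ∈ K, ∀ x ∈ U, |φ x| ≤ ε

/-- The family of functions on `K ⊆ E*` obtained by evaluating the elements of `B ⊆ E`. -/
def evalFamily (B : Set E) (K : Set (WeakDual ℝ E)) : Set (K → ℝ) :=
  {g | ∃ b ∈ B, g = fun φ : K => (φ : WeakDual ℝ E) b}

/-- `B` is a tame subset of `E`. -/
def IsTameSubset (B : Set E) : Prop :=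
  ∀ K : Set (WeakDual ℝ E), IsEquicontinuousSet K → IsCompact K →
    IsTameFamily (evalFamily B K)

/-- An `l¹`-sequence in a locally convex space. -/
def IsL1Seq (x : ℕ → E) : Prop :=
  ∃ ρ : Seminorm ℝ E, Continuous ρ ∧ ∃ δ : ℝ, 0 < δ ∧
    ∀ (n : ℕ) (c : ℕ → ℝ),
      δ * ∑ i ∈ Finset.range n, |c i| ≤ ρ (∑ i ∈ Finset.range n, c i • x i)

/-- A sequence is weak Cauchy if `(φ (x n))` converges for every continuous functional. -/
def IsWeakCauchy (x : ℕ → E) : Prop :=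
  ∀ φ : E →L[ℝ] ℝ, ∃ l : ℝ, Tendsto (fun n => φ (x n)) atTop (𝓝 l)

end Defs

/-- The Cantor cube `C = {0,1}^ℕ`. -/
abbrev CantorCube : Type := ℕ → Bool

/-- `E = ℝ^C` with the product topology. -/
abbrev BigProd : Type := CantorCube → ℝ

/-- The `n`-th coordinate projection `C → ℝ`, as an element of `E = ℝ^C`. -/
def proj (n : ℕ) : BigProd := fun α => if α n then (1 : ℝ) else 0

/-- The dense linear subspace of `ℝ^C` of all functions with finite support. -/
def finSuppSubmodule : Submodule ℝ BigProd where
  carrier := {f | (Function.support f).Finite}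
  zero_mem' := by simp [Function.support_zero]
  add_mem' := fun hf hg => (hf.union hg).subset (Function.support_add _ _)
  smul_mem' := fun c f hf => hf.subset (Function.support_const_smul_subset c f)

/-! Every seminorm on `ℝ^ι` that is bounded on a fixed neighbourhood of `0` vanishes on the
common kernel of finitely many coordinates `x ↦ x i`, `i ∈ I`, and is then dominated by
`max_{i ∈ I} |x i|` times a constant. A bounded sequence has pairs of terms that are arbitrarily
close on the finitely many coordinates in `I`. Hence on an equicontinuous set `K` the evaluations
at a bounded sequence have pairs that are uniformly close on `K`, which an independent sequence
cannot have; and a bounded sequence is never `l¹`.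

On the subspace of finitely (or countably) supported functions, a diagonal argument over the
countable union of the supports gives a coordinatewise convergent subsequence, and it is weak
Cauchy because every continuous functional is a finite combination of coordinates.

Evaluating at a point `α` of the Cantor cube with `α (ψ n) = true` exactly for even `n` shows that
`(proj (ψ n))` is not weak Cauchy. -/

lemma Seminorm.eq_zero_of_forall_smul_le {E : Type*} [AddCommGroup E] [Module ℝ E]
    (p : Seminorm ℝ E) {x : E} {C : ℝ} (h : ∀ c : ℝ, p (c • x) ≤ C) : p x = 0 := by
  by_contra hx
  have hpos : 0 < p x := (apply_nonneg p x).lt_of_ne' hx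
  have hC : 0 ≤ C := by simpa using h 0
  have := h ((C + 1) / p x)
  rw [map_smul_eq_mul, Real.norm_eq_abs, abs_of_nonneg (by positivity),
    div_mul_cancel₀ _ hx] at this
  linarith

lemma IsL1Seq.exists_le_seminorm_sub {E : Type*} [AddCommGroup E] [Module ℝ E]
    [TopologicalSpace E] {x : ℕ → E} (hx : IsL1Seq x) :
    ∃ ρ : Seminorm ℝ E, Continuous ρ ∧ ∃ δ > 0, ∀ m n, m ≠ n → δ ≤ ρ (x n - x m) := by
  obtain ⟨ρ, hρ, δ, hδ, hl1⟩ := hx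
  refine ⟨ρ, hρ, δ, hδ, fun m n hmn => ?_⟩
  set c : ℕ → ℝ := Pi.single n 1 - Pi.single m 1
  have hn : n ∈ Finset.range (max m n + 1) := Finset.mem_range.2 (by omega)
  have hm : m ∈ Finset.range (max m n + 1) := Finset.mem_range.2 (by omega)
  have hcn : |c n| = 1 := by simp [c, Ne.symm hmn]
  have hsum : ∑ k ∈ Finset.range (max m n + 1), c k • x k = x n - x m := by
    simp [c, sub_smul, Finset.sum_sub_distrib, Pi.single_apply, hm, hn]
  calc δ = δ * |c n| := by rw [hcn, mul_one]
    _ ≤ δ * ∑ k ∈ Finset.range (max m n + 1), |c k| :=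
      mul_le_mul_of_nonneg_left (Finset.single_le_sum (fun k _ => abs_nonneg (c k)) hn) hδ.le
    _ ≤ ρ (x n - x m) := hsum ▸ hl1 _ c

lemma IndepSeq.exists_forall_ne_exists_lt_sub {X : Type*} {f : ℕ → X → ℝ} (hf : IndepSeq f) :
    ∃ δ > 0, ∀ m n, m ≠ n → ∃ x, δ < f n x - f m x := by
  obtain ⟨a, b, hab, hind⟩ := hf
  refine ⟨b - a, sub_pos.2 hab, fun m n hmn => ?_⟩
  obtain ⟨x, hm, hn⟩ := hind {m} {n} (Finset.disjoint_singleton.2 hmn)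
  exact ⟨x, by linarith [hm m (Finset.mem_singleton_self m), hn n (Finset.mem_singleton_self n)]⟩

lemma Bornology.IsVonNBounded.exists_forall_abs_le {E : Type*} [AddCommGroup E] [Module ℝ E]
    [TopologicalSpace E] {s : Set E} (hs : IsVonNBounded ℝ s) (f : E →L[ℝ] ℝ) :
    ∃ M, ∀ x ∈ s, |f x| ≤ M := by
  obtain ⟨M, hM⟩ := isBounded_iff_forall_norm_le.1 <|
    (NormedSpace.isVonNBounded_iff ℝ).1 (hs.image f)
  exact ⟨M, fun x hx => hM _ (Set.mem_image_of_mem _ hx)⟩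

section Coordinates

-- `π` will be the identity of `ι → ℝ` or the inclusion of a subspace containing the unit
-- vectors `e i`.
variable {ι E : Type*} [DecidableEq ι] [AddCommGroup E] [Module ℝ E] {π : E →ₗ[ℝ] ι → ℝ}
  {e : ι → E}

lemma coord_sub_sum_smul_eq_zero (he : ∀ i, π (e i) = Pi.single i 1)
    (I : Finset ι) (x : E) {j : ι} (hj : j ∈ I) :
    π (x - ∑ i ∈ I, π x i • e i) j = 0 := by
  simp [he, Pi.single_apply, hj]

lemma LinearMap.eq_sum_coord_mul (he : ∀ i, π (e i) = Pi.single i 1) {I : Finset ι}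
    (f : E →ₗ[ℝ] ℝ) (hf : ∀ x, (∀ i ∈ I, π x i = 0) → f x = 0) (x : E) :
    f x = ∑ i ∈ I, π x i * f (e i) := by
  simpa [sub_eq_zero] using hf _ fun j => coord_sub_sum_smul_eq_zero he I x

lemma Seminorm.le_mul_sum_of_abs_coord_le (he : ∀ i, π (e i) = Pi.single i 1) {I : Finset ι}
    (p : Seminorm ℝ E) (hp : ∀ x, (∀ i ∈ I, π x i = 0) → p x = 0) {x : E} {η : ℝ}
    (hx : ∀ i ∈ I, |π x i| ≤ η) : p x ≤ η * ∑ i ∈ I, p (e i) := by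
  set s := ∑ i ∈ I, π x i • e i
  calc p x ≤ p (x - s) + p s := by simpa using map_add_le_add p (x - s) s
    _ = p s := by rw [hp _ fun j => coord_sub_sum_smul_eq_zero he I x, zero_add]
    _ ≤ ∑ i ∈ I, p (π x i • e i) :=
      Finset.le_sum_of_subadditive p (map_zero p).le (map_add_le_add p) I _
    _ = ∑ i ∈ I, |π x i| * p (e i) := by simp [map_smul_eq_mul]
    _ ≤ η * ∑ i ∈ I, p (e i) := by
      rw [Finset.mul_sum]
      exact Finset.sum_le_sum fun i hi => mul_le_mul_of_nonneg_right (hx i hi) (apply_nonneg _ _)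

end Coordinates

section Topology

variable {ι E : Type*} [AddCommGroup E] [Module ℝ E] [TopologicalSpace E] {π : E →ₗ[ℝ] ι → ℝ}

lemma exists_finset_of_mem_nhds_zero (hπ : IsInducing π) {V : Set E} (hV : V ∈ 𝓝 0) :
    ∃ I : Finset ι, ∀ x, (∀ i ∈ I, π x i = 0) → x ∈ V := by
  rw [hπ.nhds_eq_comap, map_zero] at hV
  obtain ⟨U, hU, hUV⟩ := hV
  rw [nhds_pi, Filter.mem_pi] at hU
  obtain ⟨I, hI, t, ht, htU⟩ := hU
  refine ⟨hI.toFinset, fun x hx => hUV (htU fun i hi => ?_)⟩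
  rw [hx i (hI.mem_toFinset.2 hi)]
  exact mem_of_mem_nhds (ht i)

lemma exists_finset_seminorm_eq_zero (hπ : IsInducing π) {V : Set E} (hV : V ∈ 𝓝 0) :
    ∃ I : Finset ι, ∀ p : Seminorm ℝ E, (∀ x ∈ V, p x ≤ 1) →
      ∀ x, (∀ i ∈ I, π x i = 0) → p x = 0 := by
  obtain ⟨I, hI⟩ := exists_finset_of_mem_nhds_zero hπ hV
  refine ⟨I, fun p hp x hx => p.eq_zero_of_forall_smul_le fun c => hp _ (hI _ fun i hi => ?_)⟩
  simp [hx i hi]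

lemma Seminorm.exists_finset_eq_zero_of_continuous (hπ : IsInducing π) (p : Seminorm ℝ E)
    (hp : Continuous p) : ∃ I : Finset ι, ∀ x, (∀ i ∈ I, π x i = 0) → p x = 0 := by
  have hV : p ⁻¹' Set.Iic 1 ∈ 𝓝 0 :=
    hp.continuousAt.preimage_mem_nhds (by simpa using Iic_mem_nhds one_pos)
  obtain ⟨I, hI⟩ := exists_finset_seminorm_eq_zero hπ hV
  exact ⟨I, hI p fun _ hx => hx⟩

end Topology

section Subsequences

variable {ι : Type*}

-- A diagonal argument: sequential compactness of a countable product of intervals.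
lemma exists_strictMono_forall_tendsto (z : ℕ → ι → ℝ)
    (hS : (⋃ n, Function.support (z n)).Countable) (hz : ∀ i, ∃ M, ∀ n, |z n i| ≤ M) :
    ∃ ψ : ℕ → ℕ, StrictMono ψ ∧ ∀ i, ∃ l, Tendsto (fun n => z (ψ n) i) atTop (𝓝 l) := by
  set S := ⋃ n, Function.support (z n)
  have := hS.to_subtype
  choose M hM using hz
  have hbox : IsCompact (Set.univ.pi fun s : S => Set.Icc (-M s) (M s)) :=
    isCompact_univ_pi fun _ => isCompact_Icc
  obtain ⟨w, -, ψ, hψ, hw⟩ := hbox.tendsto_subseq (x := fun n (s : S) => z n s)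
    fun n s _ => abs_le.1 (hM s n)
  refine ⟨ψ, hψ, fun i => ?_⟩
  by_cases hi : i ∈ S
  · exact ⟨w ⟨i, hi⟩, (continuous_apply _).continuousAt.tendsto.comp hw⟩
  · have hzero : ∀ n, z n i = 0 := fun n => by
      simpa [S] using fun h => hi (Set.mem_iUnion.2 ⟨n, h⟩)
    exact ⟨0, by simp [hzero]⟩

lemma exists_ne_forall_abs_sub_lt (z : ℕ → ι → ℝ) (hz : ∀ i, ∃ M, ∀ n, |z n i| ≤ M)
    (I : Finset ι) {η : ℝ} (hη : 0 < η) :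
    ∃ m n, m ≠ n ∧ ∀ i ∈ I, |z n i - z m i| < η := by
  obtain ⟨ψ, hψ, hlim⟩ := exists_strictMono_forall_tendsto (fun n (i : I) => z n i)
    (Set.to_countable _) fun i => hz i
  have hgap : ∀ i ∈ I, ∀ᶠ k in atTop, |z (ψ (k + 1)) i - z (ψ k) i| < η := fun i hi => by
    obtain ⟨l, hl⟩ := hlim ⟨i, hi⟩
    have := ((hl.comp (tendsto_add_atTop_nat 1)).sub hl).abs
    rw [sub_self, abs_zero] at this
    exact this.eventually (gt_mem_nhds hη)
  obtain ⟨k, hk⟩ := ((eventually_all_finset I).2 hgap).exists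
  exact ⟨ψ k, ψ (k + 1), (hψ (Nat.lt_succ_self k)).ne, hk⟩

end Subsequences

section Pi

variable {ι : Type*}

theorem isTameSubset_of_isVonNBounded {B : Set (ι → ℝ)} (hB : Bornology.IsVonNBounded ℝ B) :
    IsTameSubset B := by
  classical
  rintro K hKeq hK ⟨f, hfB, hind⟩
  obtain ⟨δ, hδ, hsep⟩ := hind.exists_forall_ne_exists_lt_sub
  choose v hvB hfv using hfB
  obtain ⟨U, hU, hKU⟩ := hKeq 1 one_pos
  obtain ⟨I, hI⟩ := exists_finset_seminorm_eq_zero (π := LinearMap.id) .id hU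
  let e : ι → ι → ℝ := fun i => Pi.single i 1
  obtain ⟨C, hC⟩ : ∃ C, ∀ φ ∈ K, ‖∑ i ∈ I, |φ (e i)|‖ ≤ C :=
    hK.exists_bound_of_continuousOn <| Continuous.continuousOn <|
      continuous_finsetSum I fun i _ => (WeakDual.eval_continuous (e i)).abs
  obtain ⟨m, n, hmn, hclose⟩ := exists_ne_forall_abs_sub_lt v
    (fun i => (hB.exists_forall_abs_le (ContinuousLinearMap.proj i)).imp
      fun M hM n => hM _ (hvB n))
    I (div_pos hδ (by positivity : (0 : ℝ) < |C| + 1))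
  obtain ⟨⟨φ, hφK⟩, hφ⟩ := hsep m n hmn
  let p : Seminorm ℝ (ι → ℝ) := (normSeminorm ℝ ℝ).comp (φ : (ι → ℝ) →L[ℝ] ℝ).toLinearMap
  have hp : ∀ x, p x = |φ x| := fun _ => rfl
  have hbound := p.le_mul_sum_of_abs_coord_le (π := LinearMap.id) (e := e) (fun _ => rfl)
    (hI p fun x hx => (hp x).trans_le (hKU φ hφK x hx)) (x := v n - v m)
    fun i hi => (hclose i hi).le
  simp only [hfv, hp, map_sub] at hφ hbound
  have hCφ : ∑ i ∈ I, |φ (e i)| ≤ |C| :=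
    (le_abs_self _).trans ((hC φ hφK).trans (le_abs_self C))
  have : δ / (|C| + 1) * ∑ i ∈ I, |φ (e i)| < δ := by
    rw [div_mul_eq_mul_div, div_lt_iff₀ (by positivity)]
    nlinarith
  linarith [le_abs_self (φ (v n) - φ (v m))]

theorem not_isL1Seq_of_isVonNBounded {x : ℕ → ι → ℝ}
    (hx : Bornology.IsVonNBounded ℝ (Set.range x)) : ¬ IsL1Seq x := by
  classical
  intro hl1
  obtain ⟨ρ, hρ, δ, hδ, hsep⟩ := hl1.exists_le_seminorm_sub
  obtain ⟨I, hI⟩ := ρ.exists_finset_eq_zero_of_continuous (π := LinearMap.id) .id hρ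
  set C := ∑ i ∈ I, ρ (Pi.single i 1)
  have hC : 0 ≤ C := Finset.sum_nonneg fun _ _ => apply_nonneg _ _
  obtain ⟨m, n, hmn, hclose⟩ := exists_ne_forall_abs_sub_lt x
    (fun i => (hx.exists_forall_abs_le (ContinuousLinearMap.proj i)).imp
      fun M hM n => hM _ (Set.mem_range_self n))
    I (div_pos hδ (by positivity : (0 : ℝ) < C + 1))
  have hbound := ρ.le_mul_sum_of_abs_coord_le (π := LinearMap.id) (e := fun i => Pi.single i 1)
    (fun _ => rfl) hI (x := x n - x m) fun i hi => (hclose i hi).le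
  have : δ / (C + 1) * C < δ := by
    rw [div_mul_eq_mul_div, div_lt_iff₀ (by positivity)]
    nlinarith
  linarith [hsep m n hmn]

end Pi

theorem dense_setOf_support_finite {ι M : Type*} [TopologicalSpace M] [Zero M] :
    Dense {f : ι → M | (Function.support f).Finite} := by
  intro f
  rw [mem_closure_iff_nhds]
  intro U hU
  rw [nhds_pi, Filter.mem_pi] at hU
  obtain ⟨I, hI, t, ht, htU⟩ := hU
  classical
  refine ⟨I.indicator f, htU fun i hi => ?_, hI.subset Set.support_indicator_subset⟩
  simpa [Set.indicator_of_mem hi] using mem_of_mem_nhds (ht i)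

theorem exists_strictMono_isWeakCauchy_of_countable_support {ι : Type*} [DecidableEq ι]
    {Y : Submodule ℝ (ι → ℝ)} (hY : ∀ y ∈ Y, (Function.support y).Countable)
    (hsingle : ∀ i, Pi.single i 1 ∈ Y) {y : ℕ → Y}
    (hy : Bornology.IsVonNBounded ℝ (Set.range y)) :
    ∃ ψ : ℕ → ℕ, StrictMono ψ ∧ IsWeakCauchy (y ∘ ψ) := by
  obtain ⟨ψ, hψ, hlim⟩ := exists_strictMono_forall_tendsto (fun n => (y n : ι → ℝ))
    (Set.countable_iUnion fun n => hY _ (y n).2)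
    fun i => (hy.exists_forall_abs_le ((ContinuousLinearMap.proj i).comp Y.subtypeL)).imp
      fun M hM n => hM _ (Set.mem_range_self n)
  choose l hl using hlim
  refine ⟨ψ, hψ, fun φ => ?_⟩
  let p : Seminorm ℝ Y := (normSeminorm ℝ ℝ).comp (φ : Y →ₗ[ℝ] ℝ)
  obtain ⟨I, hI⟩ := p.exists_finset_eq_zero_of_continuous (π := Y.subtype) .subtypeVal
    (continuous_norm.comp φ.continuous)
  have hrepr := (φ : Y →ₗ[ℝ] ℝ).eq_sum_coord_mul (π := Y.subtype)
    (e := fun i => ⟨Pi.single i 1, hsingle i⟩) (fun _ => rfl) fun x hx => norm_eq_zero.1 (hI x hx)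
  refine ⟨∑ i ∈ I, l i * φ ⟨Pi.single i 1, hsingle i⟩, ?_⟩
  exact (tendsto_finsetSum I fun i _ => (hl i).mul_const _).congr fun n => (hrepr _).symm

lemma not_tendsto_ite_even (l : ℝ) :
    ¬ Tendsto (fun n : ℕ => if Even n then (1 : ℝ) else 0) atTop (𝓝 l) := by
  intro h
  have hgap := ((h.comp (tendsto_add_atTop_nat 1)).sub h).abs
  rw [sub_self, abs_zero] at hgap
  have hone : ∀ n : ℕ, |(if Even (n + 1) then (1 : ℝ) else 0) - if Even n then 1 else 0| = 1 := by
    intro n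
    by_cases hn : Even n <;> simp [Nat.even_add_one, hn]
  simp only [Function.comp_def, hone] at hgap
  exact one_ne_zero (tendsto_nhds_unique tendsto_const_nhds hgap)

lemma isVonNBounded_range_proj : Bornology.IsVonNBounded ℝ (Set.range proj) := by
  rw [Bornology.isVonNBounded_pi_iff]
  intro α
  refine (NormedSpace.isVonNBounded_closedBall ℝ ℝ 1).subset ?_
  rintro _ ⟨_, ⟨n, rfl⟩, rfl⟩
  by_cases h : α n <;> simp [proj, h]

theorem not_exists_strictMono_isWeakCauchy_proj :
    ¬ ∃ ψ : ℕ → ℕ, StrictMono ψ ∧ IsWeakCauchy (proj ∘ ψ) := by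
  rintro ⟨ψ, hψ, hwc⟩
  let α : CantorCube := Function.extend ψ (fun n => decide (Even n)) fun _ => false
  obtain ⟨l, hl⟩ := hwc (ContinuousLinearMap.proj α)
  refine not_tendsto_ite_even l (hl.congr fun n => ?_)
  simp [α, proj, hψ.injective.extend_apply]

/-- For `E = ℝ^{ {0,1}^ℕ }` with the product topology:
(i) `E` is a tame locally convex space; (ii) the sequence of coordinate projections is
bounded but has no weak Cauchy subsequence (so `E` is not Rosenthal); (iii) the dense
subspace `Y` of finitely supported functions is a Rosenthal lcs; and the projections
have no `l¹`-subsequence — so Rosenthal's dichotomy fails in `E`. -/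
theorem product_space_tame_not_rosenthal :
    (∀ B : Set BigProd, Bornology.IsVonNBounded ℝ B → IsTameSubset B) ∧
    (Bornology.IsVonNBounded ℝ (Set.range proj) ∧
      ¬ ∃ ψ : ℕ → ℕ, StrictMono ψ ∧ IsWeakCauchy (proj ∘ ψ)) ∧
    (Dense (finSuppSubmodule : Set BigProd) ∧
      ∀ y : ℕ → finSuppSubmodule, Bornology.IsVonNBounded ℝ (Set.range y) →
        ∃ ψ : ℕ → ℕ, StrictMono ψ ∧ IsWeakCauchy (y ∘ ψ)) ∧
    (¬ ∃ ψ : ℕ → ℕ, StrictMono ψ ∧ IsL1Seq (proj ∘ ψ)) := by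
  classical
  refine ⟨fun B hB => isTameSubset_of_isVonNBounded hB,
    ⟨isVonNBounded_range_proj, not_exists_strictMono_isWeakCauchy_proj⟩,
    ⟨dense_setOf_support_finite, fun y hy => ?_⟩, ?_⟩
  · exact exists_strictMono_isWeakCauchy_of_countable_support (fun _ hf => Set.Finite.countable hf)
      (fun i => (Set.finite_singleton i).subset Pi.support_single_subset) hy
  · rintro ⟨ψ, -, hl1⟩
    exact not_isL1Seq_of_isVonNBounded
      (isVonNBounded_range_proj.subset (Set.range_comp_subset_range ψ proj)) hl1
end

section
/- Let E be a real locally convex space and let B ⊆ E be relatively weakly compact, i.e. the closure of B in the weak topology of E is weakly compact. Then B is a DLP subset of E: for every K ∈ eqc(E*), the family {φ ↦ φ(b) : b ∈ B} of functions on K has the double limit property. -/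
open Filter Topology

/-- A bounded family of functions indexed by membership in `F` has the double limit
property when the two iterated limits agree whenever both exist. -/
def HasDLP {K : Type*} (F : Set (K → ℝ)) : Prop :=
  ∀ f : ℕ → K → ℝ, (∀ n, f n ∈ F) → ∀ x : ℕ → K,
    ∀ (l : ℕ → ℝ) (L₁ : ℝ),
      (∀ n, Tendsto (fun m => f n (x m)) atTop (𝓝 (l n))) →
      Tendsto l atTop (𝓝 L₁) →
    ∀ (l' : ℕ → ℝ) (L₂ : ℝ),
      (∀ m, Tendsto (fun n => f n (x m)) atTop (𝓝 (l' m))) →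
      Tendsto l' atTop (𝓝 L₂) →
    L₁ = L₂

variable {E : Type*} [AddCommGroup E] [Module ℝ E] [TopologicalSpace E]

/-- The identity map of `E` onto `E` with its weak topology. -/
def toWeakSp (x : E) : WeakSpace ℝ E := x

/-! Grothendieck's argument: pick a weak-star cluster point `φ ∈ K` of `(x m)` and a weak
cluster point `c` of `(b n)`. Since `(ψ, z) ↦ ψ z` is separately continuous, both iterated
limits of `x m (b n)` are forced to equal `φ c`. -/

section IteratedLimits

variable {ι κ X Y Z : Type*} [TopologicalSpace X] [TopologicalSpace Y] [TopologicalSpace Z]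
  [T2Space Z]

theorem MapClusterPt.eq_of_tendsto_comp {F : Filter ι} {u : ι → X} {a : X}
    (ha : MapClusterPt a F u) {g : X → Z} (hg : Continuous g) {L : Z}
    (hL : Tendsto (g ∘ u) F (𝓝 L)) : g a = L :=
  eq_of_nhds_neBot ((ha.continuousAt_comp hg.continuousAt).clusterPt.mono hL)

theorem iterated_limits_eq_of_mapClusterPt {F : Filter ι} {G : Filter κ} (p : X → Y → Z)
    (hp_left : ∀ y, Continuous (p · y)) (hp_right : ∀ x, Continuous (p x))
    {u : κ → X} {v : ι → Y} {a : X} {c : Y}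
    (ha : MapClusterPt a G u) (hc : MapClusterPt c F v)
    {l : ι → Z} {L₁ : Z} (hl : ∀ n, Tendsto (fun m => p (u m) (v n)) G (𝓝 (l n)))
    (hL₁ : Tendsto l F (𝓝 L₁))
    {l' : κ → Z} {L₂ : Z} (hl' : ∀ m, Tendsto (fun n => p (u m) (v n)) F (𝓝 (l' m)))
    (hL₂ : Tendsto l' G (𝓝 L₂)) :
    L₁ = L₂ := by
  obtain rfl : l = fun n => p a (v n) :=
    funext fun n => (ha.eq_of_tendsto_comp (hp_left (v n)) (hl n)).symm
  obtain rfl : l' = fun m => p (u m) c :=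
    funext fun m => (hc.eq_of_tendsto_comp (hp_right (u m)) (hl' m)).symm
  calc L₁ = p a c := (hc.eq_of_tendsto_comp (hp_right a) hL₁).symm
    _ = L₂ := ha.eq_of_tendsto_comp (hp_left c) hL₂

end IteratedLimits

theorem relatively_weakly_compact_is_DLP_general
    {E : Type*} [AddCommGroup E] [Module ℝ E] [TopologicalSpace E]
    (B : Set E) (hB : IsCompact (closure (toWeakSp '' B))) :
    ∀ K : Set (WeakDual ℝ E), IsEquicontinuousSet K → IsCompact K →
      HasDLP (evalFamily B K) := by
  intro K _ hK f hf x l L₁ hl hL₁ l' L₂ hl' hL₂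
  choose b hbB hfb using hf
  obtain rfl : f = fun n (φ : K) => (φ : WeakDual ℝ E) (b n) := funext hfb
  obtain ⟨φ, -, hφ⟩ := hK.exists_mapClusterPt_of_frequently
    (l := atTop) (Frequently.of_forall fun m => (x m).2)
  obtain ⟨c, -, hc⟩ := hB.exists_mapClusterPt_of_frequently (l := atTop)
    (f := fun n => toWeakSp (b n))
    (Frequently.of_forall fun n => subset_closure (Set.mem_image_of_mem _ (hbB n)))
  exact iterated_limits_eq_of_mapClusterPt (fun (ψ : WeakDual ℝ E) (z : WeakSpace ℝ E) => ψ z)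
    (fun z => WeakDual.eval_continuous (E := E) z)
    (fun ψ => WeakBilin.eval_continuous (topDualPairing ℝ E).flip ψ) hφ hc hl hL₁ hl' hL₂

/-- A relatively weakly compact subset `B` of a real locally convex
space is a DLP subset: for every equicontinuous, weak-star compact `K ⊆ E*`, the family
of evaluations of `B` on `K` has the double limit property. -/
theorem relatively_weakly_compact_is_DLP
    {E : Type*} [AddCommGroup E] [Module ℝ E] [TopologicalSpace E]
    [IsTopologicalAddGroup E] [ContinuousSMul ℝ E] [LocallyConvexSpace ℝ E]
    (B : Set E) (hB : IsCompact (closure (toWeakSp '' B))) :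
    ∀ K : Set (WeakDual ℝ E), IsEquicontinuousSet K → IsCompact K →
      HasDLP (evalFamily B K) :=
  relatively_weakly_compact_is_DLP_general B hB
end
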